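/- Continuity of the Bregman projection: let Φ be Legendre, C closed convex with C ∩ int(dom Φ) ≠ ∅, and suppose D_Φ(x, ·) is coercive for some x ∈ dom Φ ∩ C. Then y ↦ proj_Φ(y, C) is continuous on int(dom Φ). -/

import Mathlib

/-!
With `D = bregman Φ g`, the variational inequalities characterising `p = P y` and `p' = P y'`
give `D p' p ≤ D p' p + D p p' = ⟪g p' - g p, p' - p⟫ ≤ ⟪g y' - g y, p' - p⟫`.
The function `D · p` is convex, vanishes at `p` and, by strict convexity and compactness, is
bounded below by some `m > 0` on a small sphere around `p`; hence it grows at least linearly away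
from `p`. Since a differentiable convex function has a continuous gradient on the interior of its
domain, `g y' → g y` as `y' → y`, and the two estimates force `p' → p`.
-/

open scoped RealInnerProductSpace

/-- Bregman distance generated by `Φ` with gradient map `g`. -/
noncomputable def bregman {E : Type*} [NormedAddCommGroup E] [InnerProductSpace ℝ E]
    (Φ : E → ℝ) (g : E → E) (x y : E) : ℝ :=
  Φ x - Φ y - ⟪g y, x - y⟫

/-- `Φ` (with domain `S` and gradient map `g` on `int S`) is a Legendre function. -/
structure IsLegendre {E : Type*} [NormedAddCommGroup E] [InnerProductSpace ℝ E]
    [CompleteSpace E] (S : Set E) (Φ : E → ℝ) (g : E → E) : Prop where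
  interior_nonempty : (interior S).Nonempty
  convexOn : ConvexOn ℝ S Φ
  lsc : LowerSemicontinuousOn Φ S
  grad : ∀ x ∈ interior S, HasGradientAt Φ (g x) x
  strictConvexOn : StrictConvexOn ℝ (interior S) Φ
  ess_smooth : ∀ (u : ℕ → E) (zb : E), (∀ n, u n ∈ interior S) → zb ∈ frontier S →
    Filter.Tendsto u Filter.atTop (nhds zb) →
    Filter.Tendsto (fun n => ‖g (u n)‖) Filter.atTop Filter.atTop

open Filter Set Topology Metric AffineMap

section Convex

variable {E : Type*} [NormedAddCommGroup E] [InnerProductSpace ℝ E]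
  {s : Set E} {f : E → ℝ} {x y : E}

theorem ConvexOn.inner_le_sub_of_hasGradientAt [CompleteSpace E] {f' : E}
    (hf : ConvexOn ℝ s f) (hx : x ∈ s) (hy : y ∈ s) (hf' : HasGradientAt f f' x) :
    ⟪f', y - x⟫ ≤ f y - f x := by
  let ℓ : ℝ →ᵃ[ℝ] E := lineMap x y
  have hd : HasDerivAt (f ∘ ℓ) ⟪f', y - x⟫ 0 := by
    simpa using (hasGradientAt_iff_hasFDerivAt.1 hf').comp_hasDerivAt_of_eq (0 : ℝ)
      hasDerivAt_lineMap (lineMap_apply_zero x y).symm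
  simpa [ℓ, slope_def_field] using (hf.comp_affineMap ℓ).le_slope_of_hasDerivAt
    (x := 0) (y := 1) (by simpa [ℓ]) (by simpa [ℓ]) zero_lt_one hd

theorem StrictConvexOn.inner_lt_sub_of_hasGradientAt [CompleteSpace E] {f' : E}
    (hf : StrictConvexOn ℝ s f) (hx : x ∈ s) (hy : y ∈ s) (hxy : x ≠ y)
    (hf' : HasGradientAt f f' x) : ⟪f', y - x⟫ < f y - f x := by
  set m : E := (1 / 2 : ℝ) • x + (1 / 2 : ℝ) • y
  have hm : f m < 1 / 2 * f x + 1 / 2 * f y :=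
    hf.2 hx hy hxy (by norm_num) (by norm_num) (by norm_num)
  have hmS : m ∈ s := hf.1 hx hy (by norm_num) (by norm_num) (by norm_num)
  have hle := hf.convexOn.inner_le_sub_of_hasGradientAt hx hmS hf'
  rw [show m - x = (1 / 2 : ℝ) • (y - x) by module, real_inner_smul_right] at hle
  linarith

theorem IsMinOn.inner_sub_nonneg_of_hasGradientAt [CompleteSpace E] {K : Set E} {f' : E}
    (hK : Convex ℝ K) (hmin : IsMinOn f K x) (hf' : HasGradientAt f f' x)
    (hx : x ∈ K) (hy : y ∈ K) : 0 ≤ ⟪f', y - x⟫ :=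
  hmin.localize.hasFDerivWithinAt_nonneg (hasGradientAt_iff_hasFDerivAt.1 hf').hasFDerivWithinAt
    (sub_mem_posTangentConeAt_of_segment_subset (hK.segment_subset hx hy))

theorem ConvexOn.mul_norm_sub_le_of_le_on_sphere {r m : ℝ}
    (hf : ConvexOn ℝ s f) (hx : x ∈ s) (hy : y ∈ s) (hr : 0 < r) (hry : r ≤ ‖y - x‖)
    (hm : ∀ z ∈ sphere x r, m ≤ f z - f x) : m * ‖y - x‖ ≤ r * (f y - f x) := by
  set R := ‖y - x‖
  have hR : 0 < R := hr.trans_le hry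
  have hzf : f ((1 - r / R) • x + (r / R) • y) ≤ (1 - r / R) * f x + r / R * f y :=
    hf.2 hx hy (by rw [sub_nonneg, div_le_one hR]; exact hry) (by positivity) (by ring)
  have hz : (1 - r / R) • x + (r / R) • y ∈ sphere x r := by
    rw [mem_sphere, dist_eq_norm,
      show (1 - r / R) • x + (r / R) • y - x = (r / R) • (y - x) by module, norm_smul,
      Real.norm_of_nonneg (by positivity), div_mul_cancel₀ _ hR.ne']
  have hmz := hm _ hz
  have : m ≤ r / R * (f y - f x) := by linarith
  calc m * R ≤ r / R * (f y - f x) * R := by gcongr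
    _ = r * (f y - f x) := by field_simp

theorem norm_le_of_forall_norm_eq_inner_le {v : E} {t C : ℝ} (ht : 0 < t) (hC : 0 ≤ C)
    (h : ∀ w : E, ‖w‖ = t → ⟪v, w⟫ ≤ C * t) : ‖v‖ ≤ C := by
  rcases eq_or_ne v 0 with rfl | hv
  · simpa using hC
  have hv' : 0 < ‖v‖ := norm_pos_iff.2 hv
  have := h ((t / ‖v‖) • v)
    (by rw [norm_smul, Real.norm_of_nonneg (by positivity), div_mul_cancel₀ _ hv'.ne'])
  rw [real_inner_smul_right, real_inner_self_eq_norm_sq] at this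
  refine le_of_mul_le_mul_left ?_ ht
  calc t * ‖v‖ = t / ‖v‖ * ‖v‖ ^ 2 := by field_simp
    _ ≤ C * t := this
    _ = t * C := mul_comm _ _

theorem ConvexOn.continuousOn_gradient [FiniteDimensional ℝ E] {f' : E → E}
    (hf : ConvexOn ℝ s f) (hf' : ∀ x ∈ interior s, HasGradientAt f (f' x) x) :
    ContinuousOn f' (interior s) := by
  intro y hy
  rw [Metric.continuousWithinAt_iff]
  intro η hη
  obtain ⟨r, hr, hball⟩ := nhds_basis_closedBall.mem_iff.1 (isOpen_interior.mem_nhds hy)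
  obtain ⟨t₀, ht₀, hexp⟩ : ∃ t₀ > 0, ∀ h : E, ‖h‖ < t₀ →
      f (y + h) - f y - ⟪f' y, h⟫ ≤ η / 4 * ‖h‖ := by
    obtain ⟨t₀, ht₀, h⟩ := Metric.eventually_nhds_iff.1
      ((hasGradientAt_iff_isLittleO_nhds_zero.1 (hf' y hy)).def (by positivity : 0 < η / 4))
    exact ⟨t₀, ht₀, fun v hv => (le_abs_self _).trans (h (by simpa using hv))⟩
  set t := min (t₀ / 2) (r / 2)
  have ht : 0 < t := by positivity
  have hfc : UniformContinuousOn f (closedBall y r) :=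
    (isCompact_closedBall y r).uniformContinuousOn_of_continuous fun x hx =>
      (hf' x (hball hx)).differentiableAt.continuousAt.continuousWithinAt
  obtain ⟨δ, hδ, hfδ⟩ := Metric.uniformContinuousOn_iff.1 hfc (η * t / 4) (by positivity)
  refine ⟨min δ (r / 2), by positivity, fun y' hy' hyy' => ?_⟩
  rw [dist_eq_norm]
  suffices ‖f' y' - f' y‖ ≤ 3 / 4 * η by linarith
  -- Convexity bounds `⟪f' y', w⟫` by `f (y' + w) - f y'`, uniform continuity makes this
  -- close to `f (y + w) - f y`, and differentiability at `y` makes that close to `⟪f' y, w⟫`.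
  refine norm_le_of_forall_norm_eq_inner_le ht (by positivity) fun w hw => ?_
  have hyy'δ : dist y' y < δ := hyy'.trans_le (min_le_left _ _)
  have hyy'r : dist y' y ≤ r / 2 := hyy'.le.trans (min_le_right _ _)
  have ht_r : t ≤ r / 2 := min_le_right _ _
  have hy'b : y' ∈ closedBall y r := hyy'r.trans (by linarith)
  have hy'w : y' + w ∈ closedBall y r :=
    (dist_triangle _ y' _).trans (by rw [dist_self_add_left, hw]; linarith)
  have hyw : y + w ∈ closedBall y r := by
    rw [mem_closedBall, dist_self_add_left, hw]; linarith
  have hyb : y ∈ closedBall y r := mem_closedBall_self hr.le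
  have hsupp : ⟪f' y', w⟫ ≤ f (y' + w) - f y' := by
    simpa using hf.inner_le_sub_of_hasGradientAt (interior_subset hy')
      (interior_subset (hball hy'w)) (hf' y' hy')
  have hdiff := hexp w (by rw [hw]; exact (min_le_left _ _).trans_lt (by linarith))
  rw [hw] at hdiff
  have hunif₁ := (abs_lt.1 (Real.dist_eq _ _ ▸ hfδ _ hy'w _ hyw (by simpa using hyy'δ))).2
  have hunif₂ :=
    (abs_lt.1 (Real.dist_eq _ _ ▸ hfδ _ hyb _ hy'b (by simpa [dist_comm] using hyy'δ))).2
  rw [inner_sub_left]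
  linarith

end Convex

section Bregman

variable {E : Type*} [NormedAddCommGroup E] [InnerProductSpace ℝ E]
  {Φ : E → ℝ} {g : E → E} {S K U : Set E} {x y p p' y' : E}

@[simp]
theorem bregman_self : bregman Φ g x x = 0 := by simp [bregman]

theorem bregman_add_bregman :
    bregman Φ g x y + bregman Φ g y x = ⟪g x - g y, x - y⟫ := by
  simp only [bregman, inner_sub_left, inner_sub_right]
  ring

theorem bregman_nonneg [CompleteSpace E] (hΦ : ConvexOn ℝ S Φ) (hx : x ∈ S) (hy : y ∈ S)
    (hg : HasGradientAt Φ (g y) y) : 0 ≤ bregman Φ g x y := by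
  have := hΦ.inner_le_sub_of_hasGradientAt hy hx hg
  rw [bregman]; linarith

theorem bregman_pos [CompleteSpace E] (hΦ : StrictConvexOn ℝ S Φ) (hx : x ∈ S) (hy : y ∈ S)
    (hxy : x ≠ y) (hg : HasGradientAt Φ (g y) y) : 0 < bregman Φ g x y := by
  have := hΦ.inner_lt_sub_of_hasGradientAt hy hx hxy.symm hg
  rw [bregman]; linarith

theorem convexOn_bregman_left (hΦ : ConvexOn ℝ S Φ) : ConvexOn ℝ S (bregman Φ g · y) := by
  refine ((hΦ.sub ((innerₛₗ ℝ (g y)).concaveOn hΦ.1)).add_const (⟪g y, y⟫ - Φ y)).congr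
    fun w _ => ?_
  simp only [bregman, Pi.add_apply, Pi.sub_apply, innerₛₗ_apply_apply, inner_sub_right]
  ring

theorem hasGradientAt_bregman_left [CompleteSpace E] (hg : HasGradientAt Φ (g x) x) :
    HasGradientAt (bregman Φ g · y) (g x - g y) x := by
  rw [hasGradientAt_iff_hasFDerivAt] at hg ⊢
  rw [map_sub]
  have hlin : HasFDerivAt (fun w => ⟪g y, w - y⟫) (InnerProductSpace.toDual ℝ E (g y)) x :=
    (InnerProductSpace.toDual ℝ E (g y)).hasFDerivAt.comp x ((hasFDerivAt_id x).sub_const y)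
  exact (hg.sub_const _).sub hlin

theorem IsCompact.exists_pos_le_bregman [CompleteSpace E] (hK : IsCompact K)
    (hΦ : StrictConvexOn ℝ U Φ) (hg : ∀ x ∈ U, HasGradientAt Φ (g x) x) (hKU : K ⊆ U)
    (hp : p ∈ U) (hpK : p ∉ K) : ∃ m > 0, ∀ z ∈ K, m ≤ bregman Φ g z p := by
  have hcont : ContinuousOn (bregman Φ g · p) K := by
    have hΦc : ContinuousOn Φ K := fun z hz =>
      (hg z (hKU hz)).differentiableAt.continuousAt.continuousWithinAt
    unfold bregman
    fun_prop
  exact hK.exists_forall_le' hcont fun z hz =>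
    bregman_pos hΦ (hKU hz) hp (ne_of_mem_of_not_mem hz hpK) (hg p hp)

theorem bregman_le_inner_of_isMinOn [CompleteSpace E] (hΦ : ConvexOn ℝ S Φ) (hK : Convex ℝ K)
    (hKS : K ⊆ S) (hp : p ∈ K) (hp' : p' ∈ K) (hgp : HasGradientAt Φ (g p) p)
    (hgp' : HasGradientAt Φ (g p') p') (hmin : IsMinOn (bregman Φ g · y) K p)
    (hmin' : IsMinOn (bregman Φ g · y') K p') :
    bregman Φ g p' p ≤ ⟪g y' - g y, p' - p⟫ := by
  have h := hmin.inner_sub_nonneg_of_hasGradientAt hK (hasGradientAt_bregman_left hgp) hp hp'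
  have h' := hmin'.inner_sub_nonneg_of_hasGradientAt hK (hasGradientAt_bregman_left hgp') hp' hp
  have hsum := bregman_add_bregman (Φ := Φ) (g := g) (x := p') (y := p)
  have hnn := bregman_nonneg hΦ (hKS hp) (hKS hp') hgp'
  rw [show p - p' = -(p' - p) by abel, inner_neg_right] at h'
  rw [show g y' - g y = (g p' - g p) - (g p' - g y') + (g p - g y) by abel, inner_add_left,
    inner_sub_left]
  linarith

theorem exists_pos_forall_norm_sub_lt_of_bregman_le [FiniteDimensional ℝ E]
    (hΦ : ConvexOn ℝ S Φ) (hΦs : StrictConvexOn ℝ (interior S) Φ)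
    (hg : ∀ x ∈ interior S, HasGradientAt Φ (g x) x) (hp : p ∈ interior S) {ε : ℝ}
    (hε : 0 < ε) :
    ∃ c > 0, ∀ z ∈ S, bregman Φ g z p ≤ c * ‖z - p‖ → ‖z - p‖ < ε := by
  obtain ⟨r, hr, hball⟩ := nhds_basis_closedBall.mem_iff.1 (isOpen_interior.mem_nhds hp)
  set ρ := min r ε
  have hρ : 0 < ρ := by positivity
  obtain ⟨m, hm, hmρ⟩ := (isCompact_sphere p ρ).exists_pos_le_bregman hΦs hg
    (sphere_subset_closedBall.trans
      ((closedBall_subset_closedBall (min_le_left _ _)).trans hball))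
    hp (by simp [hρ.ne])
  refine ⟨m / (2 * ρ), by positivity, fun z hz hzp => ?_⟩
  by_contra! hεz
  have hρz : ρ ≤ ‖z - p‖ := (min_le_right _ _).trans hεz
  have hgrowth := (convexOn_bregman_left (g := g) (y := p) hΦ).mul_norm_sub_le_of_le_on_sphere
    (interior_subset hp) hz hρ hρz (fun w hw => by simpa using hmρ w hw)
  rw [bregman_self, sub_zero] at hgrowth
  have hpos : 0 < m * ‖z - p‖ := mul_pos hm (hρ.trans_le hρz)
  have : m * ‖z - p‖ ≤ m * ‖z - p‖ / 2 :=
    calc m * ‖z - p‖ ≤ ρ * bregman Φ g z p := hgrowth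
      _ ≤ ρ * (m / (2 * ρ) * ‖z - p‖) := by gcongr
      _ = m * ‖z - p‖ / 2 := by field_simp
  linarith

end Bregman

theorem stmt12_general {E : Type*} [NormedAddCommGroup E] [InnerProductSpace ℝ E]
    [FiniteDimensional ℝ E]
    (S : Set E) (Φ : E → ℝ) (g : E → E) (hleg : IsLegendre S Φ g)
    (C : Set E) (hCconv : Convex ℝ C)
    (P : E → E)
    (hP : ∀ y ∈ interior S, P y ∈ C ∩ interior S ∧
      ∀ x ∈ C ∩ S, bregman Φ g (P y) y ≤ bregman Φ g x y) :
    ContinuousOn P (interior S) := by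
  intro y hy
  rw [Metric.continuousWithinAt_iff]
  intro ε hε
  obtain ⟨⟨hpC, hpS⟩, hpmin⟩ := hP y hy
  obtain ⟨c, hc, hsharp⟩ := exists_pos_forall_norm_sub_lt_of_bregman_le hleg.convexOn
    hleg.strictConvexOn hleg.grad hpS hε
  obtain ⟨δ, hδ, hgδ⟩ := Metric.continuousWithinAt_iff.1
    (hleg.convexOn.continuousOn_gradient hleg.grad y hy) c hc
  refine ⟨δ, hδ, fun y' hy' hyy' => ?_⟩
  obtain ⟨⟨hp'C, hp'S⟩, hp'min⟩ := hP y' hy'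
  rw [dist_eq_norm]
  refine hsharp _ (interior_subset hp'S) ?_
  calc bregman Φ g (P y') (P y)
      ≤ ⟪g y' - g y, P y' - P y⟫ :=
        bregman_le_inner_of_isMinOn hleg.convexOn (hCconv.inter hleg.convexOn.1)
          inter_subset_right ⟨hpC, interior_subset hpS⟩ ⟨hp'C, interior_subset hp'S⟩
          (hleg.grad _ hpS) (hleg.grad _ hp'S) hpmin hp'min
    _ ≤ ‖g y' - g y‖ * ‖P y' - P y‖ := real_inner_le_norm _ _
    _ ≤ c * ‖P y' - P y‖ := by
        gcongr
        exact (dist_eq_norm (g y') (g y) ▸ hgδ hy' hyy').le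

/-- Continuity of the Bregman projection: let `Φ` be Legendre, `C` closed convex
with `C ∩ int (dom Φ) ≠ ∅`, and suppose `D_Φ(x, ·)` is coercive for some
`x ∈ dom Φ ∩ C`. Then the Bregman projection map `P` (sending `y ∈ int (dom Φ)`
to the minimizer of `D_Φ(·, y)` over `C`) is continuous on `int (dom Φ)`. -/
theorem stmt12 {E : Type*} [NormedAddCommGroup E] [InnerProductSpace ℝ E]
    [FiniteDimensional ℝ E]
    (S : Set E) (Φ : E → ℝ) (g : E → E) (hleg : IsLegendre S Φ g)
    (C : Set E) (hCclosed : IsClosed C) (hCconv : Convex ℝ C)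
    (hne : (C ∩ interior S).Nonempty)
    (hcoer : ∃ x ∈ C ∩ S, Filter.Tendsto (fun y => bregman Φ g x y)
      (Filter.comap norm Filter.atTop) Filter.atTop)
    (P : E → E)
    (hP : ∀ y ∈ interior S, P y ∈ C ∩ interior S ∧
      ∀ x ∈ C ∩ S, bregman Φ g (P y) y ≤ bregman Φ g x y) :
    ContinuousOn P (interior S) :=
  stmt12_general S Φ g hleg C hCconv P hP
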